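/- Let t ≥ 2, ω a primitive t-th root of unity, Y=(y_1,…,y_m), and λ a partition with at most tm parts. Then the skew Schur polynomial s_{λ/μ}(Y, ωY, …, ω^{t−1}Y) vanishes for every partition μ strictly contained in λ if and only if λ equals its own t-core. -/

import Mathlib

open scoped BigOperators

noncomputable section

variable {K : Type} [Field K]

/-- Complete homogeneous symmetric polynomial of degree `m` in the list of variables `X`. -/
def hh : ℕ → List K → K
  | 0, _ => 1
  | _ + 1, [] => 0
  | m + 1, x :: xs => x * hh m (x :: xs) + hh (m + 1) xs
  termination_by m X => (m, X.length)

/-- `h` indexed by an integer: zero for a negative index. -/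
def hz (m : ℤ) (X : List K) : K := if 0 ≤ m then hh m.toNat X else 0

def invList (X : List K) : List K := X.map (·⁻¹)
def negList (X : List K) : List K := X.map (fun x => -x)
def powList (X : List K) (e : ℕ) : List K := X.map (· ^ e)

/-- the variables `(X, ωX, ω²X, …, ω^{t-1}X)`. -/
def twistList (t : ℕ) (ω : K) (X : List K) : List K :=
  (List.range t).flatMap fun k => X.map (fun x => ω ^ k * x)

/-- Schur polynomial (Jacobi–Trudi, `N × N` determinant). -/
def schur (lam : ℕ → ℕ) (N : ℕ) (X : List K) : K :=
  Matrix.det (Matrix.of fun i j : Fin N => hz ((lam i : ℤ) - i + j) X)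

/-- Skew Schur polynomial. -/
def skewSchur (lam mu : ℕ → ℕ) (N : ℕ) (X : List K) : K :=
  Matrix.det (Matrix.of fun i j : Fin N => hz ((lam i : ℤ) - (mu j : ℤ) - i + j) X)

/-- Symplectic character `sp_λ(X)`. -/
def spChar (lam : ℕ → ℕ) (N : ℕ) (X : List K) : K :=
  (2 : K)⁻¹ * Matrix.det (Matrix.of fun i j : Fin N =>
    hz ((lam i : ℤ) - i + j) (X ++ invList X) + hz ((lam i : ℤ) - i - j) (X ++ invList X))

/-- Odd orthogonal character `so_λ(X)`. -/
def soChar (lam : ℕ → ℕ) (N : ℕ) (X : List K) : K :=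
  Matrix.det (Matrix.of fun i j : Fin N =>
    hz ((lam i : ℤ) - i + j) (X ++ invList X ++ [1]) -
      hz ((lam i : ℤ) - i - j - 2) (X ++ invList X ++ [1]))

/-- Even orthogonal character `oe_λ(X)`. -/
def oeChar (lam : ℕ → ℕ) (N : ℕ) (X : List K) : K :=
  Matrix.det (Matrix.of fun i j : Fin N =>
    hz ((lam i : ℤ) - i + j) (X ++ invList X) -
      hz ((lam i : ℤ) - i - j - 2) (X ++ invList X))

/-- Universal even orthogonal character `𝔬_λ(Z)`. -/
def uo (lam : ℕ → ℕ) (N : ℕ) (Z : List K) : K :=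
  Matrix.det (Matrix.of fun i j : Fin N =>
    hz ((lam i : ℤ) - i + j) Z - hz ((lam i : ℤ) - i - j - 2) Z)

/-- Universal symplectic character `𝔰𝔭_λ(Z)`. -/
def usp (lam : ℕ → ℕ) (N : ℕ) (Z : List K) : K :=
  (2 : K)⁻¹ * Matrix.det (Matrix.of fun i j : Fin N =>
    hz ((lam i : ℤ) - i + j) Z + hz ((lam i : ℤ) - i - j) Z)

/-- Universal odd orthogonal character `𝔰𝔬_λ(Z)`. -/
def uso (lam : ℕ → ℕ) (N : ℕ) (Z : List K) : K :=
  Matrix.det (Matrix.of fun i j : Fin N =>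
    hz ((lam i : ℤ) - i + j) Z + hz ((lam i : ℤ) - i - j - 1) Z)

/-- The variant `𝔰𝔬⁻_λ(Z)`. -/
def usoNeg (lam : ℕ → ℕ) (N : ℕ) (Z : List K) : K :=
  Matrix.det (Matrix.of fun i j : Fin N =>
    hz ((lam i : ℤ) - i + j) Z - hz ((lam i : ℤ) - i - j - 1) Z)

/-- beta-set `β(λ,m) = (λ_1+m-1, …, λ_m)`, as a (decreasing) list. -/
def betaList (lam : ℕ → ℕ) (m : ℕ) : List ℕ :=
  (List.range m).map fun i => lam i + (m - 1 - i)

/-- the number `n_i(λ,m)` of elements of `β(λ,m)` congruent to `i` mod `s`. -/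
def nres (lam : ℕ → ℕ) (m s i : ℕ) : ℕ :=
  ((betaList lam m).filter fun b => b % s = i).length

def sortDesc (L : List ℕ) : List ℕ := List.insertionSort (· ≥ ·) L

/-- the `s`-core of `λ`, computed from `β(λ,m)`. -/
def coreP (lam : ℕ → ℕ) (m s : ℕ) : ℕ → ℕ := fun k =>
  let L := sortDesc ((List.range s).flatMap fun i =>
    (List.range (nres lam m s i)).map fun j => s * j + i)
  if k < m then L.getD k 0 + k + 1 - m else 0

/-- the `i`-th member `λ^{(i)}` of the `s`-quotient of `λ`, computed from `β(λ,m)`. -/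
def quotP (lam : ℕ → ℕ) (m s i : ℕ) : ℕ → ℕ := fun k =>
  let L := sortDesc (((betaList lam m).filter fun b => b % s = i).map fun b => b / s)
  if k < L.length then L.getD k 0 + k + 1 - L.length else 0

/-- conjugate partition (`N` a bound on the number of parts). -/
def conjB (f : ℕ → ℕ) (N k : ℕ) : ℕ := ((Finset.range N).filter fun j => k < f j).card

/-- Frobenius rank. -/
def frank (f : ℕ → ℕ) (N : ℕ) : ℕ := ((Finset.range N).filter fun i => i + 1 ≤ f i).card

/-- number of nonzero parts (`N` a bound on the number of parts). -/
def plen (f : ℕ → ℕ) (N : ℕ) : ℕ := ((Finset.range N).filter fun i => 0 < f i).card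

/-- sum of the parts (`N` a bound on the number of parts). -/
def psum (f : ℕ → ℕ) (N : ℕ) : ℕ := ∑ i ∈ Finset.range N, f i

def IsSelfConj (f : ℕ → ℕ) (N : ℕ) : Prop := ∀ k, f k = conjB f N k

/-- symplectic partition: `(α | α+1)` in Frobenius coordinates. -/
def IsSymplecticP (f : ℕ → ℕ) (N : ℕ) : Prop := ∀ i < frank f N, conjB f N i = f i + 1

/-- orthogonal partition: `(α+1 | α)` in Frobenius coordinates. -/
def IsOrthogonalP (f : ℕ → ℕ) (N : ℕ) : Prop := ∀ i < frank f N, f i = conjB f N i + 1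

/-- the partition `(λ, -μ)_N`. -/
def negConcat (f g : ℕ → ℕ) (N : ℕ) : ℕ → ℕ := fun k =>
  if k < N then g 0 + f k - g (N - 1 - k) else 0

/-- number of inversions: pairs `i < j` with `L_i < L_j`. -/
def invCount (L : List ℕ) : ℕ :=
  (Finset.univ.filter fun p : Fin L.length × Fin L.length =>
    (p.1 : ℕ) < (p.2 : ℕ) ∧ L.get p.1 < L.get p.2).card

def sgnList (L : List ℕ) : ℤ := (-1) ^ invCount L

/-- rearrangement of `β(λ,m)`: residue classes mod `s` listed in the order given by `E`
followed by the remaining residues increasingly, decreasingly within each class. -/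
def blockedList (E : List ℕ) (lam : ℕ → ℕ) (m s : ℕ) : List ℕ :=
  (E ++ (List.range s).filter fun a => a ∉ E).flatMap fun e =>
    sortDesc ((betaList lam m).filter fun b => b % s = e)

/-- sign of the permutation `σ_λ^E`. -/
def sgnSigmaE (E : List ℕ) (lam : ℕ → ℕ) (m s : ℕ) : ℤ := sgnList (blockedList E lam m s)

/-- sign of the permutation `σ_λ`. -/
def sgnSigma (lam : ℕ → ℕ) (m s : ℕ) : ℤ := sgnSigmaE [] lam m s

/-- staircase partition `(k, k-1, …, 1)`. -/
def stair (k : ℕ) : ℕ → ℕ := fun i => k - i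

/-- a field containing `n` generic variables. -/
abbrev FF (n : ℕ) : Type := FractionRing (MvPolynomial (Fin n) ℂ)

/-- the `n` generic variables of `FF n`. -/
def genX (n : ℕ) : List (FF n) :=
  List.ofFn fun i : Fin n => algebraMap (MvPolynomial (Fin n) ℂ) (FF n) (MvPolynomial.X i)

end


/-!
Write `Z = (Y, ωY, …, ω^{t-1}Y)` and `N = tm`. Since `ωZ` is a permutation of `Z`,
`h_n(Z) = ωⁿ h_n(Z)`, so `h_n(Z) = 0` unless `t ∣ n`. In terms of the beta-numbers
`b_i = λ_i + N - 1 - i` and `c_j = μ_j + N - 1 - j` the Jacobi–Trudi matrix of `s_{λ/μ}(Z)` is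
`(h_{b_i - c_j}(Z))`, so its entries vanish unless `b_i ≡ c_j (mod t)`: if the two beta-sets
have different numbers of beads on some runner of the `t`-abacus, the determinant is zero.
When `λ` is a `t`-core its beads sit at the top of their runners, which minimises `∑ b_i` for
the given runner counts; a partition `μ ⊊ λ` has smaller `∑ c_j`, hence different runner counts.

Conversely, if `λ` is not a `t`-core some bead `b_a` can move up to the free position `b_a - t`;
let `μ` be the resulting partition and `Y = (1, 0, …, 0)`. With the columns in the unsorted order
the matrix is upper triangular, with diagonal entries `h_0 = 1` except `h_t(1, ω, …, ω^{t-1})`,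
which is nonzero.
-/

open Finset

section CompleteHomogeneous

open PowerSeries

variable {K : Type} [Field K]

lemma hh_zero (L : List K) : hh 0 L = 1 := by
  cases L <;> simp [hh]

lemma hh_succ_nil (n : ℕ) : hh (n + 1) ([] : List K) = 0 := by
  simp [hh]

lemma hh_succ_cons (n : ℕ) (x : K) (L : List K) :
    hh (n + 1) (x :: L) = x * hh n (x :: L) + hh (n + 1) L := by
  rw [hh]

def hSeries (L : List K) : K⟦X⟧ := mk fun n => hh n L

noncomputable def eSeries (L : List K) : K⟦X⟧ := (L.map fun x => 1 - C x * X).prod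

lemma eSeries_cons (x : K) (L : List K) :
    eSeries (x :: L) = eSeries L - C x * (X * eSeries L) := by
  simp only [eSeries, List.map_cons, List.prod_cons]
  ring

lemma eSeries_mul_hSeries (L : List K) : eSeries L * hSeries L = 1 := by
  induction L with
  | nil =>
    ext n
    cases n <;> simp [eSeries, hSeries, coeff_one, hh_zero, hh_succ_nil]
  | cons x L ih =>
    have hcons : hSeries (x :: L) = hSeries L + C x * (X * hSeries (x :: L)) := by
      ext (_ | n)
      · simp [hSeries, hh_zero]
      · simp [hSeries, coeff_succ_X_mul, hh_succ_cons, add_comm]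
    rw [← ih, eSeries_cons]
    linear_combination (eSeries L) * hcons

lemma hh_eq_of_eSeries_eq {L L' : List K} (h : eSeries L = eSeries L') (n : ℕ) :
    hh n L = hh n L' := by
  have : hSeries L = hSeries L' := by
    calc hSeries L = hSeries L * (eSeries L' * hSeries L') := by
          rw [eSeries_mul_hSeries, mul_one]
      _ = (eSeries L * hSeries L) * hSeries L' := by rw [h]; ring
      _ = hSeries L' := by rw [eSeries_mul_hSeries, one_mul]
  simpa [hSeries] using congrArg (coeff n) this

lemma hh_perm {L L' : List K} (h : L.Perm L') (n : ℕ) : hh n L = hh n L' :=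
  hh_eq_of_eSeries_eq (h.map _).prod_eq n

lemma hh_filter_ne_zero [DecidableEq K] (L : List K) (n : ℕ) :
    hh n (L.filter (fun x => x ≠ 0)) = hh n L := by
  refine hh_eq_of_eSeries_eq ?_ n
  induction L with
  | nil => rfl
  | cons x L ih =>
    by_cases hx : x = 0
    · rw [List.filter_cons_of_neg (by simp [hx]), ih]
      simp [eSeries, hx]
    · rw [List.filter_cons_of_pos (by simp [hx]), eSeries_cons, eSeries_cons, ih]

lemma hh_map_mul (c : K) (L : List K) (n : ℕ) : hh n (L.map (c * ·)) = c ^ n * hh n L := by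
  induction L generalizing n with
  | nil => cases n <;> simp [hh_zero, hh_succ_nil]
  | cons x L ihL =>
    induction n with
    | zero => simp [hh_zero]
    | succ n ihn =>
      simp only [List.map_cons] at ihn ⊢
      rw [hh_succ_cons, hh_succ_cons, ihn, ihL]
      ring

lemma constantCoeff_eSeries (L : List K) : constantCoeff (eSeries L) = 1 := by
  induction L with
  | nil => simp [eSeries]
  | cons x L ih => rw [eSeries_cons]; simp [ih]

lemma coeff_eSeries_of_length_lt (L : List K) {n : ℕ} (hn : L.length < n) :
    coeff n (eSeries L) = 0 := by
  induction L generalizing n with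
  | nil => rw [eSeries, List.map_nil, List.prod_nil, coeff_one, if_neg (Nat.pos_iff_ne_zero.1 hn)]
  | cons x L ih =>
    simp only [List.length_cons] at hn
    obtain ⟨k, rfl⟩ : ∃ k, n = k + 1 := ⟨n - 1, by omega⟩
    rw [eSeries_cons, map_sub, coeff_C_mul, coeff_succ_X_mul, ih (by omega), ih (by omega)]
    ring

lemma coeff_length_eSeries (L : List K) :
    coeff L.length (eSeries L) = (-1) ^ L.length * L.prod := by
  induction L with
  | nil => simp [eSeries]
  | cons x L ih =>
    rw [List.length_cons, eSeries_cons, map_sub, coeff_C_mul, coeff_succ_X_mul, ih,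
      coeff_eSeries_of_length_lt L (by omega)]
    simp only [List.prod_cons, pow_succ]
    ring

/-- Read off from the coefficient of `X ^ L.length` in `eSeries L * hSeries L = 1`. -/
lemma hh_length_eq_of_forall_hh_eq_zero (L : List K) (hL : L ≠ [])
    (h : ∀ n, 0 < n → n < L.length → hh n L = 0) :
    hh L.length L = -((-1) ^ L.length * L.prod) := by
  have key := congrArg (coeff L.length) (eSeries_mul_hSeries L)
  obtain ⟨s, hs⟩ : ∃ s, L.length = s + 1 := ⟨L.length - 1, by
    have := List.length_pos_iff.mpr hL; omega⟩
  rw [coeff_mul, Nat.sum_antidiagonal_eq_sum_range_succ_mk, coeff_one, if_neg (by omega),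
    hs, sum_range_succ, sum_range_succ', sum_eq_zero] at key
  · simp only [Nat.sub_zero, Nat.sub_self, ← hs, coeff_length_eSeries] at key
    simp only [hSeries, coeff_mk, hh_zero] at key
    rw [coeff_zero_eq_constantCoeff, constantCoeff_eSeries] at key
    linear_combination key
  · intro a ha
    simp only [hSeries, coeff_mk]
    rw [h _ (by simp only [mem_range] at ha; omega) (by omega), mul_zero]

end CompleteHomogeneous

section Twist

variable {K : Type} [Field K]

lemma twistList_map_mul_self_perm {t : ℕ} {ω : K} (hω : ω ^ t = 1) (Y : List K) :
    ((twistList t ω Y).map (ω * ·)).Perm (twistList t ω Y) := by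
  obtain _ | s := t
  · simp [twistList]
  have hω' : ω * ω ^ s = 1 := by rw [← pow_succ', hω]
  have hrot : (twistList (s + 1) ω Y).map (ω * ·) =
      ((List.range s).flatMap fun k => Y.map (ω ^ (k + 1) * ·)) ++ Y.map (ω ^ 0 * ·) := by
    simp [twistList, List.map_flatMap, List.range_succ, hω', Function.comp_def, ← mul_assoc,
      pow_succ']
  have hY : twistList (s + 1) ω Y =
      Y.map (ω ^ 0 * ·) ++ (List.range s).flatMap fun k => Y.map (ω ^ (k + 1) * ·) := by
    simp [twistList, List.range_succ_eq_map, List.flatMap_map]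
  rw [hrot, hY]
  exact List.perm_append_comm

lemma hh_twistList_eq_zero {t n : ℕ} {ω : K} (hω : IsPrimitiveRoot ω t) (hn : ¬ t ∣ n)
    (Y : List K) : hh n (twistList t ω Y) = 0 := by
  have hrot : hh n (twistList t ω Y) = ω ^ n * hh n (twistList t ω Y) := by
    rw [← hh_map_mul, hh_perm (twistList_map_mul_self_perm hω.pow_eq_one Y)]
  have hωn : 1 - ω ^ n ≠ 0 := sub_ne_zero.mpr fun h => hn (hω.dvd_of_pow_eq_one n h.symm)
  exact (mul_eq_zero.mp (by linear_combination hrot : (1 - ω ^ n) * _ = 0)).resolve_left hωn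

lemma hz_of_neg {d : ℤ} (hd : d < 0) (L : List K) : hz d L = 0 := by
  simp [hz, not_le.mpr hd]

lemma hz_zero (L : List K) : hz 0 L = 1 := by
  simp [hz, hh_zero]

lemma hz_twistList_eq_zero {t : ℕ} {ω : K} (hω : IsPrimitiveRoot ω t) {d : ℤ}
    (hd : ¬ (t : ℤ) ∣ d) (Y : List K) : hz d (twistList t ω Y) = 0 := by
  unfold hz
  split_ifs with h0
  · refine hh_twistList_eq_zero hω (fun h => hd ?_) Y
    rw [← Int.toNat_of_nonneg h0]
    exact Int.natCast_dvd_natCast.mpr h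
  · rfl

lemma hh_twistList_singleton_ne_zero {t : ℕ} (ht : 0 < t) {ω : K} (hω : IsPrimitiveRoot ω t) :
    hh t (twistList t ω [1]) ≠ 0 := by
  have hlen : (twistList t ω [1]).length = t := by simp [twistList]
  have hne : twistList t ω [1] ≠ [] := List.ne_nil_of_length_pos (by omega)
  have key := hh_length_eq_of_forall_hh_eq_zero _ hne fun n hn hnt =>
    hh_twistList_eq_zero hω (fun h => by have := Nat.le_of_dvd hn h; omega) _
  rw [hlen] at key
  rw [key, neg_ne_zero]
  refine mul_ne_zero (pow_ne_zero _ (by norm_num)) (List.prod_ne_zero ?_)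
  simp only [twistList, List.map_cons, mul_one, List.map_nil, List.mem_flatMap]
  rintro ⟨k, -, hk⟩
  exact pow_ne_zero k (hω.ne_zero ht.ne') (List.mem_singleton.mp hk).symm

lemma hz_twistList_one_zeros_ne_zero [DecidableEq K] {t : ℕ} (ht : 0 < t) {ω : K}
    (hω : IsPrimitiveRoot ω t) (k : ℕ) : hz t (twistList t ω (1 :: List.replicate k 0)) ≠ 0 := by
  have hfilter : (twistList t ω (1 :: List.replicate k 0)).filter (fun x => x ≠ 0) =
      twistList t ω [1] := by
    simp [twistList, List.filter_flatMap, hω.ne_zero ht.ne']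
  rw [hz, if_pos (by positivity), Int.toNat_natCast, ← hh_filter_ne_zero, hfilter]
  exact hh_twistList_singleton_ne_zero ht hω

end Twist

section Permutations

lemma Function.Injective.update_of_forall_ne {α β : Type*} [DecidableEq α] {f : α → β}
    (hf : Function.Injective f) {a : α} {v : β} (hv : ∀ i, f i ≠ v) :
    Function.Injective (Function.update f a v) := fun i j hij => by
  by_cases hi : i = a <;> by_cases hj : j = a
  · rw [hi, hj]
  · rw [hi, Function.update_self, Function.update_of_ne hj] at hij
    exact absurd hij.symm (hv j)
  · rw [hj, Function.update_self, Function.update_of_ne hi] at hij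
    exact absurd hij (hv i)
  · rw [Function.update_of_ne hi, Function.update_of_ne hj] at hij
    exact hf hij

lemma det_eq_zero_of_card_filter_ne {n R α : Type*} [Fintype n] [DecidableEq n] [CommRing R]
    [DecidableEq α] (M : Matrix n n R) (f g : n → α) (hM : ∀ i j, f i ≠ g j → M i j = 0)
    {r : α} (hr : #{i | f i = r} ≠ #{j | g j = r}) : M.det = 0 := by
  rw [Matrix.det_apply]
  refine sum_eq_zero fun σ _ => ?_
  obtain ⟨i, hi⟩ : ∃ i, f (σ i) ≠ g i := by
    by_contra! hfg
    refine hr (card_equiv σ.symm fun i => ?_)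
    simp [← hfg]
  rw [prod_eq_zero (f := fun i => M (σ i) i) (mem_univ i) (hM _ _ hi), smul_zero]

lemma exists_perm_strictAnti_comp {n : ℕ} {α : Type*} [LinearOrder α] {h : Fin n → α}
    (hh : Function.Injective h) : ∃ σ : Equiv.Perm (Fin n), StrictAnti (h ∘ σ) :=
  ⟨Fin.revPerm.trans (Tuple.sort h),
    ((Tuple.monotone_sort h).strictMono_of_injective
      (hh.comp (Tuple.sort h).injective)).comp_strictAnti Fin.rev_strictAnti⟩

/-- Sorting decreasingly is monotone for the pointwise order. -/
lemma le_of_forall_comp_perm_le {n : ℕ} {α : Type*} [LinearOrder α] {B C : Fin n → α}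
    (hB : Antitone B) (hC : Antitone C) (σ : Equiv.Perm (Fin n)) (h : ∀ i, C (σ i) ≤ B i)
    (k : Fin n) : C k ≤ B k := by
  by_contra! hk
  have hmaps : Set.MapsTo σ.symm (Iic k) (Iio k) := fun j hj => by
    simp only [coe_Iic, coe_Iio, Set.mem_Iic, Set.mem_Iio] at hj ⊢
    refine hB.reflect_lt (hk.trans_le ((hC hj).trans ?_))
    simpa using h (σ.symm j)
  have := card_le_card_of_injOn σ.symm hmaps σ.symm.injective.injOn
  simp at this

lemma sub_le_of_strictAnti {n : ℕ} {C : Fin n → ℕ} (hC : StrictAnti C) (j : Fin n) :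
    n - 1 - j ≤ C j := by
  have hmaps : Set.MapsTo C (Ioi j) (Iio (C j)) := fun i hi => by
    simpa using hC (by simpa using hi)
  simpa using card_le_card_of_injOn C hmaps hC.injective.injOn

end Permutations

section Beta

def beta (lam : ℕ → ℕ) (N i : ℕ) : ℕ := lam i + (N - 1 - i)

variable {lam : ℕ → ℕ} {N : ℕ}

lemma betaList_eq_ofFn (lam : ℕ → ℕ) (N : ℕ) :
    betaList lam N = List.ofFn fun i : Fin N => beta lam N i :=
  List.ext_getElem (by simp [betaList]) (by simp [betaList, beta])

lemma strictAnti_beta (hlam : Antitone lam) : StrictAnti fun i : Fin N => beta lam N i := by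
  intro i j hij
  have := hlam hij.le
  have := j.isLt
  simp only [beta]
  omega

lemma betaList_pairwise (hlam : Antitone lam) : (betaList lam N).Pairwise (· > ·) := by
  rw [betaList_eq_ofFn, List.pairwise_ofFn]
  exact strictAnti_beta hlam

lemma betaList_nodup (hlam : Antitone lam) : (betaList lam N).Nodup :=
  (betaList_pairwise hlam).imp (ne_of_gt ·)

lemma sum_betaList (lam : ℕ → ℕ) (N : ℕ) :
    (betaList lam N).sum = ∑ i ∈ range N, beta lam N i := by
  rw [betaList_eq_ofFn, List.sum_ofFn, Fin.sum_univ_eq_sum_range (beta lam N)]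

lemma nres_eq_card (lam : ℕ → ℕ) (N t r : ℕ) :
    nres lam N t r = #{i : Fin N | beta lam N i % t = r} := by
  rw [nres, betaList_eq_ofFn, ← List.countP_eq_length_filter, ← Multiset.coe_countP,
    ← Fin.univ_val_map, Multiset.countP_map]
  rfl

lemma skewSchur_eq_det_beta {K : Type} [Field K] (lam mu : ℕ → ℕ) (N : ℕ) (X : List K) :
    skewSchur lam mu N X =
      (Matrix.of fun i j : Fin N => hz ((beta lam N i : ℤ) - beta mu N j) X).det := by
  unfold skewSchur beta
  congr! 4 with i j
  congr 1
  have := i.isLt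
  have := j.isLt
  omega

def ofBeta (C : Fin N → ℕ) (k : ℕ) : ℕ := if hk : k < N then C ⟨k, hk⟩ - (N - 1 - k) else 0

variable {C : Fin N → ℕ}

lemma beta_ofBeta (hC : StrictAnti C) (i : Fin N) : beta (ofBeta C) N i = C i := by
  have := sub_le_of_strictAnti hC i
  simp only [beta, ofBeta, i.isLt, dif_pos, Fin.eta]
  omega

lemma antitone_ofBeta (hC : StrictAnti C) : Antitone (ofBeta C) := by
  refine antitone_nat_of_succ_le fun k => ?_
  by_cases hk : k + 1 < N
  · have := hC (show (⟨k, by omega⟩ : Fin N) < ⟨k + 1, hk⟩ from Nat.lt_succ_self k)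
    simp only [ofBeta, hk, dif_pos, show k < N by omega]
    omega
  · simp [ofBeta, hk]

lemma ofBeta_le_iff (hC : StrictAnti C) :
    (∀ i, ofBeta C i ≤ lam i) ↔ ∀ i : Fin N, C i ≤ beta lam N i := by
  refine ⟨fun h i => ?_, fun h i => ?_⟩
  · rw [← beta_ofBeta hC i]
    exact Nat.add_le_add_right (h i) _
  · by_cases hi : i < N
    · simpa [← beta_ofBeta hC ⟨i, hi⟩, beta] using h ⟨i, hi⟩
    · simp [ofBeta, hi]

end Beta

section Core

/-- The beta-set inside `coreP`: `n i` beads at the top of runner `i` of the `t`-abacus. -/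
def coreBetaList (t : ℕ) (n : ℕ → ℕ) : List ℕ :=
  (List.range t).flatMap fun i => (List.range (n i)).map fun j => t * j + i

lemma list_sum_map_range {M : Type*} [AddCommMonoid M] (f : ℕ → M) (n : ℕ) :
    ((List.range n).map f).sum = ∑ i ∈ range n, f i := by
  rw [← List.toFinset_range, List.sum_toFinset _ List.nodup_range]

variable {t : ℕ}

lemma mul_add_mod_of_lt {j i : ℕ} (hi : i < t) : (t * j + i) % t = i := by
  rw [Nat.mul_add_mod, Nat.mod_eq_of_lt hi]

lemma mul_add_div_of_lt {j i : ℕ} (hi : i < t) : (t * j + i) / t = j := by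
  rw [Nat.mul_add_div (by omega), Nat.div_eq_of_lt hi, add_zero]

lemma mem_coreBetaList (ht : 0 < t) {n : ℕ → ℕ} {x : ℕ} :
    x ∈ coreBetaList t n ↔ x / t < n (x % t) := by
  simp only [coreBetaList, List.mem_flatMap, List.mem_map, List.mem_range]
  constructor
  · rintro ⟨i, hi, j, hj, rfl⟩
    rwa [mul_add_mod_of_lt hi, mul_add_div_of_lt hi]
  · exact fun h => ⟨x % t, Nat.mod_lt x ht, x / t, h, Nat.div_add_mod x t⟩

lemma coreBetaList_nodup (n : ℕ → ℕ) : (coreBetaList t n).Nodup := by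
  refine List.nodup_flatMap.2 ⟨fun i hi => ?_, List.nodup_range.pairwise_of_forall_ne ?_⟩
  · rw [List.mem_range] at hi
    exact List.nodup_range.map fun j j' h => by
      simpa [mul_add_div_of_lt hi] using congrArg (· / t) h
  · intro i hi i' hi' hne
    simp only [List.mem_range] at hi hi'
    simp only [Function.onFun, List.disjoint_left, List.mem_map, List.mem_range]
    rintro _ ⟨j, -, rfl⟩ ⟨j', -, h⟩
    refine hne (Eq.symm ?_)
    simpa [mul_add_mod_of_lt hi, mul_add_mod_of_lt hi'] using congrArg (· % t) h

lemma length_coreBetaList (n : ℕ → ℕ) : (coreBetaList t n).length = ∑ i ∈ range t, n i := by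
  simp [coreBetaList, List.length_flatMap, list_sum_map_range]

lemma sum_coreBetaList (n : ℕ → ℕ) :
    (coreBetaList t n).sum = ∑ i ∈ range t, ∑ j ∈ range (n i), (t * j + i) := by
  simp only [coreBetaList, List.flatMap_def, List.sum_flatten, List.map_map, Function.comp_def,
    list_sum_map_range]

end Core

section ResidueClasses

def resCount (S : Finset ℕ) (t r : ℕ) : ℕ := #{x ∈ S | x % t = r}

variable {t : ℕ}

lemma sum_resCount (ht : 0 < t) (S : Finset ℕ) : ∑ r ∈ range t, resCount S t r = #S :=
  (card_eq_sum_card_fiberwise fun x _ => mem_range.2 (Nat.mod_lt x ht)).symm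

lemma sum_range_card_le_sum {f : ℕ → ℕ} (hf : Monotone f) (s : Finset ℕ) :
    ∑ j ∈ range #s, f j ≤ ∑ x ∈ s, f x := by
  induction s using Finset.induction_on_max with
  | empty => simp
  | insert a s ha ih =>
    have ha' : a ∉ s := fun h => lt_irrefl a (ha a h)
    have hcard : #s ≤ a := by
      simpa using card_le_card fun x hx => mem_range.2 (ha x hx)
    rw [card_insert_of_notMem ha', sum_range_succ, sum_insert ha']
    have := hf hcard
    omega

lemma eq_range_card_of_forall_le_mem {T : Finset ℕ} (h : ∀ q ∈ T, ∀ p ≤ q, p ∈ T) :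
    T = range #T := by
  refine eq_of_subset_of_card_le (fun q hq => mem_range.2 ?_) (by simp)
  simpa using card_le_card fun p hp => h q hq p (Nat.lt_succ_iff.mp (mem_range.1 hp))

lemma div_injOn_residueClass (S : Finset ℕ) (r : ℕ) :
    Set.InjOn (· / t) (({x ∈ S | x % t = r} : Finset ℕ) : Set ℕ) := fun x hx y hy hxy => by
  simp only [coe_filter] at hx hy
  rw [← Nat.div_add_mod x t, ← Nat.div_add_mod y t, hx.2, hy.2]
  simp_all

/-- The beads of a `t`-abacus, pushed to the top of their runners, minimise the sum. -/
lemma sum_coreBetaList_resCount_le (ht : 0 < t) (S : Finset ℕ) :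
    (coreBetaList t (resCount S t)).sum ≤ ∑ x ∈ S, x := by
  rw [sum_coreBetaList, ← sum_fiberwise_of_maps_to (g := (· % t)) (f := fun x => x)
    fun x _ => mem_range.2 (Nat.mod_lt x ht)]
  refine sum_le_sum fun r _ => ?_
  have hinj := div_injOn_residueClass (t := t) S r
  calc ∑ j ∈ range (resCount S t r), (t * j + r)
      = ∑ j ∈ range #({x ∈ S | x % t = r}.image (· / t)), (t * j + r) := by
        rw [card_image_of_injOn hinj, resCount]
    _ ≤ ∑ q ∈ {x ∈ S | x % t = r}.image (· / t), (t * q + r) :=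
        sum_range_card_le_sum (fun _ _ h => Nat.add_le_add_right (Nat.mul_le_mul_left t h) r) _
    _ = ∑ x ∈ S with x % t = r, x := by
        rw [sum_image hinj]
        refine sum_congr rfl fun x hx => ?_
        rw [← (mem_filter.1 hx).2]
        exact Nat.div_add_mod x t

lemma mul_add_mem_of_closed {S : Finset ℕ} (hS : ∀ x ∈ S, t ≤ x → x - t ∈ S) {q r : ℕ}
    (hq : t * q + r ∈ S) {p : ℕ} (hp : p ≤ q) : t * p + r ∈ S := by
  obtain ⟨k, rfl⟩ := Nat.exists_eq_add_of_le hp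
  clear hp
  induction k with
  | zero => simpa using hq
  | succ k ih =>
    have hsucc : t * (p + (k + 1)) = t * (p + k) + t := by ring
    apply ih
    have := hS _ hq (by omega)
    rwa [hsucc, Nat.add_right_comm, Nat.add_sub_cancel] at this

lemma mem_coreBetaList_resCount_iff (ht : 0 < t) {S : Finset ℕ}
    (hS : ∀ x ∈ S, t ≤ x → x - t ∈ S) (x : ℕ) :
    x ∈ coreBetaList t (resCount S t) ↔ x ∈ S := by
  rw [mem_coreBetaList ht]
  have hr := Nat.mod_lt x ht
  set r := x % t
  set Q := {y ∈ S | y % t = r}.image (· / t)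
  have hQ : Q = range (resCount S t r) := by
    rw [eq_range_card_of_forall_le_mem (T := Q) ?_,
      card_image_of_injOn (div_injOn_residueClass (t := t) S r), resCount]
    simp only [Q, mem_image, mem_filter]
    rintro _ ⟨y, ⟨hy, hyr⟩, rfl⟩ p hp
    refine ⟨t * p + r, ⟨mul_add_mem_of_closed hS ?_ hp, mul_add_mod_of_lt hr⟩,
      mul_add_div_of_lt hr⟩
    rwa [← hyr, Nat.div_add_mod]
  rw [← mem_range, ← hQ]
  simp only [Q, mem_image, mem_filter]
  constructor
  · rintro ⟨y, ⟨hy, hyr⟩, hyx⟩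
    have hy' := Nat.div_add_mod y t
    have hx' := Nat.div_add_mod x t
    rw [hyx, hyr] at hy'
    rwa [show x = y by omega]
  · exact fun hx => ⟨x, ⟨hx, rfl⟩, rfl⟩

end ResidueClasses

section Cores

variable {t N : ℕ} {lam : ℕ → ℕ}

lemma nres_eq_resCount (hlam : Antitone lam) :
    nres lam N t = resCount (betaList lam N).toFinset t := by
  ext r
  rw [nres, resCount, ← List.toFinset_card_of_nodup ((betaList_nodup hlam).filter _),
    List.toFinset_filter]
  simp

lemma sum_nres (ht : 0 < t) (hlam : Antitone lam) : ∑ r ∈ range t, nres lam N t r = N := by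
  rw [nres_eq_resCount hlam, sum_resCount ht, List.toFinset_card_of_nodup (betaList_nodup hlam)]
  simp [betaList]

lemma coreP_eq_self_iff_perm (ht : 0 < t) (hlam : Antitone lam)
    (hlen : ∀ i, N ≤ i → lam i = 0) :
    (∀ k, lam k = coreP lam N t k) ↔ (betaList lam N).Perm (coreBetaList t (nres lam N t)) := by
  set L := sortDesc (coreBetaList t (nres lam N t))
  have hLperm : L.Perm (coreBetaList t (nres lam N t)) := List.perm_insertionSort _ _
  have hLsorted : L.Pairwise (· > ·) :=
    ((List.pairwise_insertionSort _ _).and (hLperm.nodup_iff.2 (coreBetaList_nodup _))).imp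
      fun h => lt_of_le_of_ne h.1 h.2.symm
  have hcoreP : ∀ k, coreP lam N t k = if k < N then L.getD k 0 + k + 1 - N else 0 :=
    fun k => rfl
  suffices (∀ k, lam k = coreP lam N t k) ↔ L = betaList lam N by
    rw [this]
    refine ⟨fun h => h ▸ hLperm, fun h => ?_⟩
    exact List.Perm.eq_of_pairwise' (hLsorted.imp le_of_lt)
      ((betaList_pairwise hlam).imp le_of_lt) (hLperm.trans h.symm)
  have hLlen : L.length = N := by
    rw [hLperm.length_eq, length_coreBetaList, sum_nres ht hlam]
  constructor
  · intro hcore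
    refine List.ext_getElem (by simp [hLlen, betaList]) fun k hkL hkB => ?_
    have := sub_le_of_strictAnti (fun i j hij => List.pairwise_iff_get.1 hLsorted i j hij)
      ⟨k, hkL⟩
    have := hcore k
    rw [hcoreP, if_pos (by omega), List.getD_eq_getElem _ _ hkL] at this
    simp only [List.get_eq_getElem] at *
    simp only [betaList_eq_ofFn, beta, List.getElem_ofFn]
    omega
  · intro hL k
    rw [hcoreP, hL]
    split_ifs with hk
    · simp only [betaList_eq_ofFn, beta, List.getD_eq_getElem?_getD, List.length_ofFn, hk,
        getElem?_pos, List.getElem_ofFn, Option.getD_some]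
      omega
    · exact hlen k (by omega)

lemma perm_coreBetaList_of_closed (ht : 0 < t) (hlam : Antitone lam)
    (hclosed : ∀ i : Fin N, t ≤ beta lam N i → ∃ j : Fin N, beta lam N j = beta lam N i - t) :
    (betaList lam N).Perm (coreBetaList t (nres lam N t)) := by
  have hS : ∀ x ∈ (betaList lam N).toFinset, t ≤ x → x - t ∈ (betaList lam N).toFinset := by
    simp only [List.mem_toFinset, betaList_eq_ofFn, List.mem_ofFn]
    rintro _ ⟨i, rfl⟩ hti
    exact hclosed i hti
  refine (List.perm_ext_iff_of_nodup (betaList_nodup hlam) (coreBetaList_nodup _)).2 fun x => ?_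
  rw [nres_eq_resCount hlam, mem_coreBetaList_resCount_iff ht hS, List.mem_toFinset]

lemma sum_betaList_lt {mu : ℕ → ℕ} (hlen : ∀ i, N ≤ i → lam i = 0) (hle : ∀ i, mu i ≤ lam i)
    (hne : mu ≠ lam) : (betaList mu N).sum < (betaList lam N).sum := by
  obtain ⟨k, hk⟩ := Function.ne_iff.1 hne
  have hkN : k < N := by
    by_contra h
    exact hk (by have := hle k; have := hlen k (by omega); omega)
  rw [sum_betaList, sum_betaList]
  refine sum_lt_sum (fun i _ => Nat.add_le_add_right (hle i) _) ⟨k, mem_range.2 hkN, ?_⟩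
  have := hle k
  simp only [beta]
  omega

end Cores

section Main

variable {K : Type} [Field K] {t N : ℕ} {lam : ℕ → ℕ}

lemma skewSchur_twistList_eq_zero {ω : K} (ht : 0 < t) (hω : IsPrimitiveRoot ω t)
    (hlam : Antitone lam) (hlen : ∀ i, N ≤ i → lam i = 0) (hcore : ∀ k, lam k = coreP lam N t k)
    {mu : ℕ → ℕ} (hmu : Antitone mu) (hle : ∀ i, mu i ≤ lam i) (hne : mu ≠ lam) (Y : List K) :
    skewSchur lam mu N (twistList t ω Y) = 0 := by
  rw [skewSchur_eq_det_beta]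
  by_cases hcount : ∀ r, nres lam N t r = nres mu N t r
  · have hsum : (betaList lam N).sum ≤ (betaList mu N).sum := calc
      (betaList lam N).sum = (coreBetaList t (nres lam N t)).sum :=
        ((coreP_eq_self_iff_perm ht hlam hlen).1 hcore).sum_eq
      _ = (coreBetaList t (nres mu N t)).sum := by rw [funext hcount]
      _ ≤ (betaList mu N).sum := by
        simpa [nres_eq_resCount hmu, List.sum_toFinset _ (betaList_nodup hmu)] using
          sum_coreBetaList_resCount_le ht (betaList mu N).toFinset
    exact absurd hsum (sum_betaList_lt hlen hle hne).not_ge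
  · obtain ⟨r, hr⟩ := not_forall.1 hcount
    refine det_eq_zero_of_card_filter_ne _ (fun i : Fin N => beta lam N i % t)
      (fun j => beta mu N j % t) (fun i j hij => hz_twistList_eq_zero hω (fun hdvd => ?_) Y)
      (r := r) (by simpa [nres_eq_card] using hr)
    exact hij (Nat.modEq_iff_dvd.2 hdvd).symm

/-- Moving the bead `B a` up to `B a - t` and keeping the columns unsorted gives an upper
triangular matrix with diagonal entries `h_0 = 1`, except `h_t` at `(a, a)`. -/
lemma det_hz_update_ne_zero {Z : List K} (hZ : ∀ d : ℤ, 0 < d → d < t → hz d Z = 0)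
    (hZt : hz t Z ≠ 0) {B : Fin N → ℕ} (hB : StrictAnti B) {a : Fin N} (hta : t ≤ B a)
    (hfree : ∀ i, B i ≠ B a - t) :
    (Matrix.of fun i j => hz ((B i : ℤ) - Function.update B a (B a - t) j) Z).det ≠ 0 := by
  rw [Matrix.det_of_isUpperTriangular]
  · refine prod_ne_zero_iff.2 fun i _ => ?_
    by_cases hi : i = a
    · subst hi
      simpa [Function.update_self, Nat.cast_sub hta] using hZt
    · simp [Function.update_of_ne hi, hz_zero]
  · intro i j (hji : j < i)
    have hlt := hB hji
    simp only [Matrix.of_apply]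
    by_cases hj : j = a
    · subst hj
      rw [Function.update_self]
      have := hfree i
      rcases lt_or_gt_of_ne this with h | h
      · exact hz_of_neg (by omega) Z
      · exact hZ _ (by omega) (by omega)
    · rw [Function.update_of_ne hj]
      exact hz_of_neg (by omega) Z

lemma exists_skewSchur_ne_zero (ht : 0 < t) {Z : List K}
    (hZ : ∀ d : ℤ, 0 < d → d < t → hz d Z = 0) (hZt : hz t Z ≠ 0)
    (hlam : Antitone lam) (hlen : ∀ i, N ≤ i → lam i = 0)
    (hnc : ¬ ∀ k, lam k = coreP lam N t k) :
    ∃ mu : ℕ → ℕ, Antitone mu ∧ (∀ i, mu i ≤ lam i) ∧ mu ≠ lam ∧ skewSchur lam mu N Z ≠ 0 := by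
  set B : Fin N → ℕ := fun i => beta lam N i
  have hB : StrictAnti B := strictAnti_beta hlam
  obtain ⟨a, hta, hfree⟩ : ∃ a, t ≤ B a ∧ ∀ i, B i ≠ B a - t := by
    by_contra! hclosed
    exact hnc ((coreP_eq_self_iff_perm ht hlam hlen).2
      (perm_coreBetaList_of_closed ht hlam hclosed))
  set h := Function.update B a (B a - t)
  have hle_B : h ≤ B := by simp [h]
  obtain ⟨σ, hσ⟩ := exists_perm_strictAnti_comp (hB.injective.update_of_forall_ne hfree)
  have hC : ∀ j : Fin N, beta (ofBeta (h ∘ σ)) N j = h (σ j) := beta_ofBeta hσ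
  refine ⟨ofBeta (h ∘ σ), antitone_ofBeta hσ, (ofBeta_le_iff hσ).2 ?_, fun heq => ?_, ?_⟩
  · exact le_of_forall_comp_perm_le hB.antitone hσ.antitone σ.symm fun i => by
      simpa using hle_B i
  · exact hfree (σ.symm a) (by simpa [h, heq, B] using hC (σ.symm a))
  · have hperm : (Matrix.of fun i j : Fin N =>
        hz ((beta lam N i : ℤ) - beta (ofBeta (h ∘ σ)) N j) Z).submatrix id σ.symm =
        Matrix.of fun i j => hz ((B i : ℤ) - h j) Z := by
      ext i j
      simp [hC, B]
    rw [skewSchur_eq_det_beta]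
    intro hdet
    apply det_hz_update_ne_zero hZ hZt hB hta hfree
    rw [← hperm, Matrix.det_permute', hdet, mul_zero]

end Main

/-- `s_{λ/μ}(Y, ωY, …, ω^{t-1}Y)` vanishes for all `μ ⊊ λ` iff
`λ` is a `t`-core. -/
theorem stmt14 (t m : ℕ) (ht : 2 ≤ t) (hm : 1 ≤ m) (ω : ℂ) (hω : IsPrimitiveRoot ω t)
    (lam : ℕ → ℕ) (hlam : Antitone lam) (hlen : ∀ i, t * m ≤ i → lam i = 0) :
    (∀ mu : ℕ → ℕ, Antitone mu → (∀ i, mu i ≤ lam i) → mu ≠ lam →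
        ∀ Y : List ℂ, Y.length = m → skewSchur lam mu (t * m) (twistList t ω Y) = 0) ↔
      ∀ k, lam k = coreP lam (t * m) t k := by
  have ht0 : 0 < t := by omega
  refine ⟨fun hvan => ?_, fun hcore mu hmu hle hne Y _ =>
    skewSchur_twistList_eq_zero ht0 hω hlam hlen hcore hmu hle hne Y⟩
  by_contra hnc
  set Y₀ : List ℂ := 1 :: List.replicate (m - 1) 0
  obtain ⟨mu, hmu, hle, hne, hnz⟩ := exists_skewSchur_ne_zero ht0
    (fun d hd hdt => hz_twistList_eq_zero hω (fun h => (Int.le_of_dvd hd h).not_gt hdt) Y₀)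
    (hz_twistList_one_zeros_ne_zero ht0 hω (m - 1)) hlam hlen hnc
  exact hnz (hvan mu hmu hle hne Y₀
    (by simp only [List.length_cons, List.length_replicate, Y₀]; omega))
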